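/- arXiv:1607.06067 — 2 statements merged into one kernel-verified Lean document; each statement's English description precedes it below -/
import Mathlib

section
/- Let Ω be a nonempty set, K a nonempty set, C the set of all bounded functions from K to ℝ, and U the set of bounded functions from Ω to ℝ. Suppose C' ⊆ C is nonempty, is closed under c ↦ Ac + B for all A ≥ 0 and B ∈ ℝ, and V : C' → U satisfies V[Ac+B] = A·V[c] + B for A ≥ 0, B ∈ ℝ, and V[c₁] ≤ V[c₂] pointwise whenever c₁ ≤ c₂ pointwise. Then the map V_b : C → U defined by V_b[c'](ω) = sup{ V[c](ω) : c ∈ C', c ≤ c' } is well-defined (each V_b[c'] is bounded), extends V, and satisfies the same two properties: V_b[Ac+B] = A·V_b[c] + B for A ≥ 0, B ∈ ℝ, and monotonicity V_b[c₁] ≤ V_b[c₂] whenever c₁ ≤ c₂ pointwise. -/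
/-! The candidate values `V c ω`, `c ∈ C'`, `c ≤ c'`, form a set that contains `inf c'` and is
bounded by `sup c'`, because constants lie in the cone and are fixed by `V`; so its supremum is
finite. Monotonicity of the extension is inclusion of these sets, on `C'` the supremum is attained
at `c` itself, and for `A > 0` the map `c ↦ A c + B` is an order isomorphism of the cone, which
turns the candidate set of `A c' + B` into the affine image of that of `c'`. -/

section GameValueMap

variable {Ω K : Type*}

structure IsGameValueMap (C' : Set (K → ℝ)) (V : (K → ℝ) → Ω → ℝ) : Prop where
  nonempty : C'.Nonempty
  affine_mem : ∀ c ∈ C', ∀ A B : ℝ, 0 ≤ A → (fun z => A * c z + B) ∈ C'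
  map_affine : ∀ c ∈ C', ∀ A B : ℝ, 0 ≤ A →
    V (fun z => A * c z + B) = fun ω => A * V c ω + B
  mono : ∀ c₁ ∈ C', ∀ c₂ ∈ C', c₁ ≤ c₂ → V c₁ ≤ V c₂

def valuesBelow (C' : Set (K → ℝ)) (V : (K → ℝ) → Ω → ℝ) (c' : K → ℝ) (ω : Ω) : Set ℝ :=
  {x | ∃ c ∈ C', c ≤ c' ∧ x = V c ω}

noncomputable def supExtension (C' : Set (K → ℝ)) (V : (K → ℝ) → Ω → ℝ) (c' : K → ℝ) (ω : Ω) :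
    ℝ :=
  sSup (valuesBelow C' V c' ω)

variable {C' : Set (K → ℝ)} {V : (K → ℝ) → Ω → ℝ}

theorem valuesBelow_mono {c₁ c₂ : K → ℝ} (h : c₁ ≤ c₂) (ω : Ω) :
    valuesBelow C' V c₁ ω ⊆ valuesBelow C' V c₂ ω := by
  rintro _ ⟨c, hc, hc₁, rfl⟩
  exact ⟨c, hc, hc₁.trans h, rfl⟩

namespace IsGameValueMap

theorem const_mem (hV : IsGameValueMap C' V) (B : ℝ) : (fun _ : K => B) ∈ C' := by
  obtain ⟨c₀, hc₀⟩ := hV.nonempty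
  simpa using hV.affine_mem c₀ hc₀ 0 B le_rfl

theorem map_const (hV : IsGameValueMap C' V) (B : ℝ) : V (fun _ : K => B) = fun _ => B := by
  obtain ⟨c₀, hc₀⟩ := hV.nonempty
  simpa using hV.map_affine c₀ hc₀ 0 B le_rfl

theorem const_mem_valuesBelow (hV : IsGameValueMap C' V) {c' : K → ℝ} {B : ℝ}
    (hB : ∀ z, B ≤ c' z) (ω : Ω) : B ∈ valuesBelow C' V c' ω :=
  ⟨fun _ => B, hV.const_mem B, hB, by rw [hV.map_const]⟩

theorem mem_upperBounds_valuesBelow (hV : IsGameValueMap C' V) {c c' : K → ℝ} (hc : c ∈ C')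
    (h : c' ≤ c) (ω : Ω) : V c ω ∈ upperBounds (valuesBelow C' V c' ω) := by
  rintro _ ⟨d, hd, hdc', rfl⟩
  exact hV.mono d hd c hc (hdc'.trans h) ω

theorem const_mem_upperBounds_valuesBelow (hV : IsGameValueMap C' V) {c' : K → ℝ} {B : ℝ}
    (hB : ∀ z, c' z ≤ B) (ω : Ω) : B ∈ upperBounds (valuesBelow C' V c' ω) := by
  simpa [hV.map_const] using hV.mem_upperBounds_valuesBelow (hV.const_mem B) hB ω

theorem valuesBelow_nonempty (hV : IsGameValueMap C' V) {c' : K → ℝ} {B : ℝ}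
    (hB : ∀ z, B ≤ c' z) (ω : Ω) : (valuesBelow C' V c' ω).Nonempty :=
  ⟨B, hV.const_mem_valuesBelow hB ω⟩

theorem bddAbove_valuesBelow (hV : IsGameValueMap C' V) {c' : K → ℝ} {B : ℝ}
    (hB : ∀ z, c' z ≤ B) (ω : Ω) : BddAbove (valuesBelow C' V c' ω) :=
  ⟨B, hV.const_mem_upperBounds_valuesBelow hB ω⟩

theorem abs_supExtension_le (hV : IsGameValueMap C' V) {c' : K → ℝ} {R : ℝ}
    (hR : ∀ z, |c' z| ≤ R) (ω : Ω) : |supExtension C' V c' ω| ≤ R := by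
  have hlow : ∀ z, -R ≤ c' z := fun z => (abs_le.1 (hR z)).1
  have hupp : ∀ z, c' z ≤ R := fun z => (abs_le.1 (hR z)).2
  refine abs_le.2 ⟨?_, ?_⟩
  · exact le_csSup (hV.bddAbove_valuesBelow hupp ω) (hV.const_mem_valuesBelow hlow ω)
  · exact csSup_le (hV.valuesBelow_nonempty hlow ω) (hV.const_mem_upperBounds_valuesBelow hupp ω)

theorem supExtension_eq (hV : IsGameValueMap C' V) {c : K → ℝ} (hc : c ∈ C') :
    supExtension C' V c = V c := by
  funext ω
  exact IsGreatest.csSup_eq ⟨⟨c, hc, le_rfl, rfl⟩, hV.mem_upperBounds_valuesBelow hc le_rfl ω⟩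

theorem supExtension_mono (hV : IsGameValueMap C' V) {c₁ c₂ : K → ℝ} {a b : ℝ}
    (ha : ∀ z, a ≤ c₁ z) (hb : ∀ z, c₂ z ≤ b) (h : c₁ ≤ c₂) (ω : Ω) :
    supExtension C' V c₁ ω ≤ supExtension C' V c₂ ω :=
  csSup_le_csSup (hV.bddAbove_valuesBelow hb ω) (hV.valuesBelow_nonempty ha ω)
    (valuesBelow_mono h ω)

theorem valuesBelow_affine (hV : IsGameValueMap C' V) (c' : K → ℝ) {A : ℝ} (hA : 0 < A)
    (B : ℝ) (ω : Ω) :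
    valuesBelow C' V (fun z => A * c' z + B) ω = (fun x => A * x + B) '' valuesBelow C' V c' ω := by
  ext x
  constructor
  · rintro ⟨c, hc, hcc', rfl⟩
    set d : K → ℝ := fun z => A⁻¹ * c z + -(A⁻¹ * B)
    have hd : d ∈ C' := hV.affine_mem c hc _ _ (inv_nonneg.2 hA.le)
    have hcd : (fun z => A * d z + B) = c := by
      funext z
      simp only [d]
      field_simp
      ring
    refine ⟨V d ω, ⟨d, hd, fun z => ?_, rfl⟩, ?_⟩
    · have := hcc' z
      simp only [d, ← mul_sub, ← sub_eq_add_neg]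
      exact (inv_mul_le_iff₀ hA).2 (by linarith)
    · rw [← hcd, hV.map_affine d hd A B hA.le]
  · rintro ⟨_, ⟨c, hc, hcc', rfl⟩, rfl⟩
    refine ⟨_, hV.affine_mem c hc A B hA.le, fun z => ?_, by rw [hV.map_affine c hc A B hA.le]⟩
    have := hcc' z
    dsimp only
    gcongr

theorem supExtension_affine (hV : IsGameValueMap C' V) {c' : K → ℝ} {a b : ℝ}
    (ha : ∀ z, a ≤ c' z) (hb : ∀ z, c' z ≤ b) {A : ℝ} (hA : 0 ≤ A) (B : ℝ) :
    supExtension C' V (fun z => A * c' z + B) = fun ω => A * supExtension C' V c' ω + B := by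
  funext ω
  rcases hA.eq_or_lt with rfl | hA
  · simp only [zero_mul, zero_add]
    rw [hV.supExtension_eq (hV.const_mem B), hV.map_const]
  · have hf : Monotone fun x : ℝ => A * x + B := fun x y hxy => by dsimp only; gcongr
    rw [supExtension, hV.valuesBelow_affine c' hA B ω]
    exact (hf.map_csSup_of_continuousAt (by fun_prop) (hV.valuesBelow_nonempty ha ω)
      (hV.bddAbove_valuesBelow hb ω)).symm

end IsGameValueMap

end GameValueMap

theorem game_value_map_extension_general
    (Ω K : Type*)
    (C' : Set (K → ℝ)) (hC'ne : C'.Nonempty)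
    (hC'affine : ∀ c ∈ C', ∀ A B : ℝ, 0 ≤ A → (fun z => A * c z + B) ∈ C')
    (V : (K → ℝ) → Ω → ℝ)
    (hVaffine : ∀ c ∈ C', ∀ A B : ℝ, 0 ≤ A →
      V (fun z => A * c z + B) = fun ω => A * V c ω + B)
    (hVmono : ∀ c₁ ∈ C', ∀ c₂ ∈ C', (∀ z, c₁ z ≤ c₂ z) → ∀ ω, V c₁ ω ≤ V c₂ ω) :
    ∃ Vb : (K → ℝ) → Ω → ℝ,
      (∀ c' : K → ℝ, (∃ R : ℝ, ∀ z : K, |c' z| ≤ R) → ∀ ω : Ω,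
        Vb c' ω = sSup {x : ℝ | ∃ c ∈ C', (∀ z, c z ≤ c' z) ∧ x = V c ω})
      ∧ (∀ c' : K → ℝ, (∃ R : ℝ, ∀ z : K, |c' z| ≤ R) →
          ∃ R : ℝ, ∀ ω : Ω, |Vb c' ω| ≤ R)
      ∧ (∀ c ∈ C', Vb c = V c)
      ∧ (∀ c' : K → ℝ, (∃ R : ℝ, ∀ z : K, |c' z| ≤ R) → ∀ A B : ℝ, 0 ≤ A →
          Vb (fun z => A * c' z + B) = fun ω => A * Vb c' ω + B)
      ∧ (∀ c₁ c₂ : K → ℝ, (∃ R : ℝ, ∀ z : K, |c₁ z| ≤ R) →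
          (∃ R : ℝ, ∀ z : K, |c₂ z| ≤ R) →
          (∀ z, c₁ z ≤ c₂ z) → ∀ ω, Vb c₁ ω ≤ Vb c₂ ω) := by
  have hV : IsGameValueMap C' V := ⟨hC'ne, hC'affine, hVaffine, hVmono⟩
  have lower {c' : K → ℝ} {R : ℝ} (hR : ∀ z, |c' z| ≤ R) : ∀ z, -R ≤ c' z :=
    fun z => (abs_le.1 (hR z)).1
  have upper {c' : K → ℝ} {R : ℝ} (hR : ∀ z, |c' z| ≤ R) : ∀ z, c' z ≤ R :=
    fun z => (abs_le.1 (hR z)).2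
  refine ⟨supExtension C' V, fun _ _ _ => rfl, ?_, fun _ => hV.supExtension_eq, ?_, ?_⟩
  · rintro c' ⟨R, hR⟩
    exact ⟨R, hV.abs_supExtension_le hR⟩
  · rintro c' ⟨R, hR⟩ A B hA
    exact hV.supExtension_affine (lower hR) (upper hR) hA B
  · rintro c₁ c₂ ⟨R₁, hR₁⟩ ⟨R₂, hR₂⟩ hle ω
    exact hV.supExtension_mono (lower hR₁) (upper hR₂) hle ω

/-- Extension of a game value map from a sub-cone of bounded payoffs
to all bounded payoffs. -/
theorem game_value_map_extension
    (Ω K : Type*) [Nonempty Ω] [Nonempty K]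
    (C' : Set (K → ℝ)) (hC'ne : C'.Nonempty)
    (hC'bdd : ∀ c ∈ C', ∃ R : ℝ, ∀ z : K, |c z| ≤ R)
    (hC'affine : ∀ c ∈ C', ∀ A B : ℝ, 0 ≤ A → (fun z => A * c z + B) ∈ C')
    (V : (K → ℝ) → Ω → ℝ)
    (hVbdd : ∀ c ∈ C', ∃ R : ℝ, ∀ ω : Ω, |V c ω| ≤ R)
    (hVaffine : ∀ c ∈ C', ∀ A B : ℝ, 0 ≤ A →
      V (fun z => A * c z + B) = fun ω => A * V c ω + B)
    (hVmono : ∀ c₁ ∈ C', ∀ c₂ ∈ C', (∀ z, c₁ z ≤ c₂ z) → ∀ ω, V c₁ ω ≤ V c₂ ω) :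
    ∃ Vb : (K → ℝ) → Ω → ℝ,
      (∀ c' : K → ℝ, (∃ R : ℝ, ∀ z : K, |c' z| ≤ R) → ∀ ω : Ω,
        Vb c' ω = sSup {x : ℝ | ∃ c ∈ C', (∀ z, c z ≤ c' z) ∧ x = V c ω})
      ∧ (∀ c' : K → ℝ, (∃ R : ℝ, ∀ z : K, |c' z| ≤ R) →
          ∃ R : ℝ, ∀ ω : Ω, |Vb c' ω| ≤ R)
      ∧ (∀ c ∈ C', Vb c = V c)
      ∧ (∀ c' : K → ℝ, (∃ R : ℝ, ∀ z : K, |c' z| ≤ R) → ∀ A B : ℝ, 0 ≤ A →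
          Vb (fun z => A * c' z + B) = fun ω => A * Vb c' ω + B)
      ∧ (∀ c₁ c₂ : K → ℝ, (∃ R : ℝ, ∀ z : K, |c₁ z| ≤ R) →
          (∃ R : ℝ, ∀ z : K, |c₂ z| ≤ R) →
          (∀ z, c₁ z ≤ c₂ z) → ∀ ω, Vb c₁ ω ≤ Vb c₂ ω) :=
  game_value_map_extension_general Ω K C' hC'ne hC'affine V hVaffine hVmono
end

section
/- Let g : ℝ → ℝ be measurable with values in [0,1], and suppose L = lim_{λ→0⁺} λ∫₀^∞ e^{−λt} g(t) dt exists. Then lim_{T→∞} (1/T)∫₀^T g(t) dt exists and equals L. -/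
/-!
Karamata's proof. For a kernel `q` on `[0, 1]` put
`A_λ(q) = λ ∫₀^∞ e^{-λt} q(e^{-λt}) g(t) dt`, so the hypothesis reads `A_λ(1) → L`.
Rescaling `λ` gives `A_λ(xⁿ) → L / (n + 1) = L ∫₀¹ xⁿ dx`, hence `A_λ(q) → L ∫₀¹ q` for
polynomials, and, since `|A_λ(q)| ≤ sup |q|`, for every continuous `q` by Weierstrass
approximation. The Cesàro mean `(1/T) ∫₀^T g` is `A_{1/T}` of the jump kernel
`x⁻¹ 𝟙(x > e⁻¹)`, whose integral over `[0, 1]` is `1`. As `g ≥ 0`, `A_λ` is monotone in the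
kernel, and squeezing the jump kernel between continuous ramps with almost the same integral
finishes the proof.
-/

open MeasureTheory Real Filter Set Topology

theorem tendsto_of_forall_approx {ι : Type*} {l : Filter ι} {u : ι → ℝ} {a : ℝ}
    (h : ∀ ε > 0, ∃ v : ι → ℝ, ∃ b, Tendsto v l (𝓝 b) ∧ (∀ᶠ i in l, |u i - v i| ≤ ε) ∧
      |b - a| ≤ ε) :
    Tendsto u l (𝓝 a) := by
  refine Metric.tendsto_nhds.2 fun ε hε => ?_
  obtain ⟨v, b, hv, huv, hba⟩ := h (ε / 3) (by positivity)
  filter_upwards [huv, Metric.tendsto_nhds.1 hv (ε / 3) (by positivity)] with i hi hvi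
  rw [Real.dist_eq] at hvi ⊢
  linarith [abs_sub_le (u i) (v i) a, abs_sub_le (v i) b a]

theorem tendsto_of_squeeze_family {ι κ : Type*} {l : Filter ι} {m : Filter κ} [m.NeBot]
    {u : ι → ℝ} {lo hi : κ → ι → ℝ} {A B : κ → ℝ} {L : ℝ}
    (hA : Tendsto A m (𝓝 L)) (hB : Tendsto B m (𝓝 L))
    (hlo : ∀ᶠ k in m, Tendsto (lo k) l (𝓝 (A k)) ∧ ∀ᶠ i in l, lo k i ≤ u i)
    (hhi : ∀ᶠ k in m, Tendsto (hi k) l (𝓝 (B k)) ∧ ∀ᶠ i in l, u i ≤ hi k i) :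
    Tendsto u l (𝓝 L) := by
  refine tendsto_order.2 ⟨fun a ha => ?_, fun a ha => ?_⟩
  · obtain ⟨k, hak, hk, hle⟩ := ((hA.eventually (lt_mem_nhds ha)).and hlo).exists
    filter_upwards [hk.eventually (lt_mem_nhds hak), hle] with i h₁ h₂ using h₁.trans_le h₂
  · obtain ⟨k, hak, hk, hle⟩ := ((hB.eventually (gt_mem_nhds ha)).and hhi).exists
    filter_upwards [hk.eventually (gt_mem_nhds hak), hle] with i h₁ h₂ using h₂.trans_lt h₁

noncomputable def weightedAbelMean (g q : ℝ → ℝ) (l : ℝ) : ℝ :=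
  l * ∫ t in Ioi 0, exp (-l * t) * q (exp (-l * t)) * g t

theorem exp_neg_mul_mem_Ioo {l t : ℝ} (hl : 0 < l) (ht : 0 < t) : exp (-l * t) ∈ Ioo 0 1 :=
  ⟨exp_pos _, exp_lt_one_iff.2 (by nlinarith)⟩

theorem integral_exp_neg_mul_Ioi {l : ℝ} (hl : 0 < l) : ∫ t in Ioi 0, exp (-l * t) = l⁻¹ := by
  simpa using integral_exp_mul_Ioi (neg_neg_of_pos hl) 0

section
variable {g q q₁ q₂ : ℝ → ℝ} {l C : ℝ}

theorem norm_weightedAbelMean_integrand_le (hg1 : ∀ t ∈ Ioi 0, |g t| ≤ 1) (hl : 0 < l)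
    (hqC : ∀ x ∈ Ioo 0 1, |q x| ≤ C) {t : ℝ} (ht : 0 < t) :
    ‖exp (-l * t) * q (exp (-l * t)) * g t‖ ≤ C * exp (-l * t) := by
  rw [norm_mul, norm_mul, norm_of_nonneg (exp_pos _).le, Real.norm_eq_abs, Real.norm_eq_abs,
    mul_comm C, mul_assoc]
  have hqt := hqC _ (exp_neg_mul_mem_Ioo hl ht)
  gcongr
  simpa using mul_le_mul hqt (hg1 t ht) (abs_nonneg _) ((abs_nonneg _).trans hqt)

theorem integrableOn_weightedAbelMean (hg : Measurable g) (hg1 : ∀ t ∈ Ioi 0, |g t| ≤ 1)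
    (hl : 0 < l) (hq : Measurable q) (hqC : ∀ x ∈ Ioo 0 1, |q x| ≤ C) :
    IntegrableOn (fun t => exp (-l * t) * q (exp (-l * t)) * g t) (Ioi 0) := by
  refine Integrable.mono' ((exp_neg_integrableOn_Ioi 0 hl).const_mul C) (by fun_prop)
    ((ae_restrict_mem measurableSet_Ioi).mono fun t ht => ?_)
  exact norm_weightedAbelMean_integrand_le hg1 hl hqC ht

theorem integrableOn_weightedAbelMean_of_continuous (hg : Measurable g)
    (hg1 : ∀ t ∈ Ioi 0, |g t| ≤ 1) (hl : 0 < l) (hq : Continuous q) :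
    IntegrableOn (fun t => exp (-l * t) * q (exp (-l * t)) * g t) (Ioi 0) :=
  let ⟨_, hC⟩ := isCompact_Icc.exists_bound_of_continuousOn hq.continuousOn
  integrableOn_weightedAbelMean hg hg1 hl hq.measurable fun x hx => hC x (Ioo_subset_Icc_self hx)

theorem abs_weightedAbelMean_le (hg1 : ∀ t ∈ Ioi 0, |g t| ≤ 1) (hl : 0 < l)
    (hqC : ∀ x ∈ Ioo 0 1, |q x| ≤ C) :
    |weightedAbelMean g q l| ≤ C := by
  have hbound : ‖∫ t in Ioi 0, exp (-l * t) * q (exp (-l * t)) * g t‖ ≤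
      ∫ t in Ioi 0, C * exp (-l * t) := by
    refine norm_integral_le_of_norm_le ((exp_neg_integrableOn_Ioi 0 hl).const_mul C)
      ((ae_restrict_mem measurableSet_Ioi).mono fun t ht =>
        norm_weightedAbelMean_integrand_le hg1 hl hqC ht)
  rw [weightedAbelMean, abs_mul, abs_of_pos hl]
  rw [integral_const_mul, integral_exp_neg_mul_Ioi hl, Real.norm_eq_abs] at hbound
  calc l * |∫ t in Ioi 0, exp (-l * t) * q (exp (-l * t)) * g t| ≤ l * (C * l⁻¹) := by gcongr
    _ = C := by field_simp

theorem weightedAbelMean_add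
    (h₁ : IntegrableOn (fun t => exp (-l * t) * q₁ (exp (-l * t)) * g t) (Ioi 0))
    (h₂ : IntegrableOn (fun t => exp (-l * t) * q₂ (exp (-l * t)) * g t) (Ioi 0)) :
    weightedAbelMean g (fun x => q₁ x + q₂ x) l =
      weightedAbelMean g q₁ l + weightedAbelMean g q₂ l := by
  simp only [weightedAbelMean, mul_add, add_mul]
  rw [integral_add h₁ h₂, mul_add]

theorem weightedAbelMean_sub
    (h₁ : IntegrableOn (fun t => exp (-l * t) * q₁ (exp (-l * t)) * g t) (Ioi 0))
    (h₂ : IntegrableOn (fun t => exp (-l * t) * q₂ (exp (-l * t)) * g t) (Ioi 0)) :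
    weightedAbelMean g (fun x => q₁ x - q₂ x) l =
      weightedAbelMean g q₁ l - weightedAbelMean g q₂ l := by
  simp only [weightedAbelMean, mul_sub, sub_mul]
  rw [integral_sub h₁ h₂, mul_sub]

theorem weightedAbelMean_const_mul (c : ℝ) :
    weightedAbelMean g (fun x => c * q x) l = c * weightedAbelMean g q l := by
  simp only [weightedAbelMean, mul_left_comm _ c, mul_assoc c, integral_const_mul]

theorem weightedAbelMean_mono (hg0 : ∀ t ∈ Ioi 0, 0 ≤ g t) (hl : 0 < l)
    (h₁ : IntegrableOn (fun t => exp (-l * t) * q₁ (exp (-l * t)) * g t) (Ioi 0))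
    (h₂ : IntegrableOn (fun t => exp (-l * t) * q₂ (exp (-l * t)) * g t) (Ioi 0))
    (hq : ∀ x ∈ Ioo 0 1, q₁ x ≤ q₂ x) :
    weightedAbelMean g q₁ l ≤ weightedAbelMean g q₂ l := by
  refine mul_le_mul_of_nonneg_left
    (setIntegral_mono_on h₁ h₂ measurableSet_Ioi fun t ht => ?_) hl.le
  have := hq _ (exp_neg_mul_mem_Ioo hl ht)
  have := hg0 t ht
  gcongr

theorem weightedAbelMean_indicator_Ioi_inv (hl : 0 < l) :
    weightedAbelMean g ((Ioi (exp (-1))).indicator (·⁻¹)) l = l * ∫ t in 0..l⁻¹, g t := by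
  have hcut : ∀ t, exp (-l * t) * (Ioi (exp (-1))).indicator (·⁻¹) (exp (-l * t)) * g t =
      (Iio l⁻¹).indicator g t := by
    intro t
    have hiff : exp (-1) < exp (-l * t) ↔ t < l⁻¹ := by
      rw [exp_lt_exp, neg_mul, neg_lt_neg_iff, ← one_div, lt_div_iff₀ hl, mul_comm]
    by_cases ht : t < l⁻¹
    · rw [indicator_of_mem (mem_Ioi.2 (hiff.2 ht)), indicator_of_mem (mem_Iio.2 ht),
        mul_inv_cancel₀ (exp_pos _).ne', one_mul]
    · rw [indicator_of_notMem (fun h => ht (hiff.1 (mem_Ioi.1 h))),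
        indicator_of_notMem (fun h => ht (mem_Iio.1 h)), mul_zero, zero_mul]
  simp only [weightedAbelMean, hcut, setIntegral_indicator measurableSet_Iio, Ioi_inter_Iio,
    intervalIntegral.integral_of_le (inv_pos.2 hl).le, integral_Ioc_eq_integral_Ioo]

theorem weightedAbelMean_pow (n : ℕ) :
    weightedAbelMean g (fun x => x ^ n) l = (n + 1 : ℝ)⁻¹ * weightedAbelMean g 1 ((n + 1) * l) := by
  have hexp : ∀ t, exp (-l * t) * exp (-l * t) ^ n = exp (-((n + 1) * l) * t) * 1 := by
    intro t
    rw [← exp_nat_mul, ← exp_add, mul_one]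
    ring_nf
  simp only [weightedAbelMean, Pi.one_apply, hexp]
  field_simp

theorem tendsto_weightedAbelMean_pow {L : ℝ} (hA : Tendsto (weightedAbelMean g 1) (𝓝[>] 0) (𝓝 L))
    (n : ℕ) : Tendsto (weightedAbelMean g fun x => x ^ n) (𝓝[>] 0) (𝓝 (L / (n + 1))) := by
  have hscale : Tendsto (fun l : ℝ => (n + 1) * l) (𝓝[>] 0) (𝓝[>] 0) :=
    tendsto_comap.mono_left (comap_mulLeft_nhdsGT_zero (by positivity)).ge
  simpa only [funext fun l => weightedAbelMean_pow (g := g) (l := l) n, div_eq_inv_mul,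
    Function.comp_def]
    using (hA.comp hscale).const_mul (n + 1 : ℝ)⁻¹

theorem tendsto_weightedAbelMean_eval (hg : Measurable g) (hg1 : ∀ t ∈ Ioi 0, |g t| ≤ 1) {L : ℝ}
    (hA : Tendsto (weightedAbelMean g 1) (𝓝[>] 0) (𝓝 L)) (p : Polynomial ℝ) :
    Tendsto (weightedAbelMean g fun x => p.eval x) (𝓝[>] 0) (𝓝 (L * ∫ x in 0..1, p.eval x)) := by
  induction p using Polynomial.induction_on' with
  | add p q hp hq =>
    simp only [Polynomial.eval_add]
    rw [intervalIntegral.integral_add (p.continuous.intervalIntegrable _ _)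
      (q.continuous.intervalIntegrable _ _), mul_add]
    refine (hp.add hq).congr' (eventually_mem_nhdsWithin.mono fun l hl => ?_)
    exact (weightedAbelMean_add (integrableOn_weightedAbelMean_of_continuous hg hg1 hl
      p.continuous) (integrableOn_weightedAbelMean_of_continuous hg hg1 hl q.continuous)).symm
  | monomial n a =>
    simp only [Polynomial.eval_monomial, intervalIntegral.integral_const_mul, integral_pow]
    convert (tendsto_weightedAbelMean_pow hA n).const_mul a using 2
    · exact weightedAbelMean_const_mul a
    · simp only [one_pow, ne_eq, Nat.add_one_ne_zero, not_false_eq_true, zero_pow, sub_zero]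
      ring

theorem tendsto_weightedAbelMean_of_continuous (hg : Measurable g)
    (hg1 : ∀ t ∈ Ioi 0, |g t| ≤ 1) {L : ℝ} (hA : Tendsto (weightedAbelMean g 1) (𝓝[>] 0) (𝓝 L))
    (hq : Continuous q) :
    Tendsto (weightedAbelMean g q) (𝓝[>] 0) (𝓝 (L * ∫ x in 0..1, q x)) := by
  refine tendsto_of_forall_approx fun ε hε => ?_
  have hη : 0 < ε / (|L| + 1) := by positivity
  have hηε : ε / (|L| + 1) ≤ ε := div_le_self hε.le (by linarith [abs_nonneg L])
  obtain ⟨p, hp⟩ := exists_polynomial_near_of_continuousOn 0 1 q hq.continuousOn _ hη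
  refine ⟨_, _, tendsto_weightedAbelMean_eval hg hg1 hA p,
    eventually_mem_nhdsWithin.mono fun l hl => ?_, ?_⟩
  · rw [← weightedAbelMean_sub (integrableOn_weightedAbelMean_of_continuous hg hg1 hl hq)
      (integrableOn_weightedAbelMean_of_continuous hg hg1 hl p.continuous)]
    refine (abs_weightedAbelMean_le hg1 hl fun x hx => ?_).trans hηε
    rw [abs_sub_comm]
    exact (hp x (Ioo_subset_Icc_self hx)).le
  · have hint : |∫ x in 0..1, (p.eval x - q x)| ≤ ε / (|L| + 1) := by
      simpa using intervalIntegral.norm_integral_le_of_norm_le_const (a := 0) (b := 1)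
        (f := fun x => p.eval x - q x)
        fun x hx => (hp x (Ioc_subset_Icc_self (by simpa using hx))).le
    rw [← mul_sub, abs_mul, ← intervalIntegral.integral_sub (p.continuous.intervalIntegrable _ _)
      (hq.intervalIntegrable _ _)]
    calc |L| * |∫ x in 0..1, (p.eval x - q x)| ≤ |L| * (ε / (|L| + 1)) := by gcongr
      _ ≤ ε := by
        rw [mul_div_assoc', div_le_iff₀ (by positivity)]
        nlinarith [abs_nonneg L]

end

noncomputable def ramp (a c x : ℝ) : ℝ := max 0 (min 1 ((x - a) / (c - a)))

section
variable {a c x : ℝ}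

theorem continuous_ramp (a c : ℝ) : Continuous (ramp a c) := by
  unfold ramp
  fun_prop

theorem ramp_nonneg : 0 ≤ ramp a c x := le_max_left _ _

theorem ramp_le_one : ramp a c x ≤ 1 := max_le zero_le_one (min_le_left _ _)

theorem ramp_eq_zero_of_le (hac : a ≤ c) (hx : x ≤ a) : ramp a c x = 0 :=
  max_eq_left (min_le_of_right_le (div_nonpos_of_nonpos_of_nonneg (by linarith) (by linarith)))

theorem ramp_eq_one_of_le (hac : a < c) (hx : c ≤ x) : ramp a c x = 1 := by
  rw [ramp, min_eq_left ((one_le_div (by linarith)).2 (by linarith)), max_eq_right zero_le_one]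

theorem ramp_div_max_le_indicator (ha : 0 ≤ a) (hac : a ≤ c) (x : ℝ) :
    ramp a c x / max x a ≤ (Ioi a).indicator (·⁻¹) x := by
  by_cases hx : a < x
  · rw [indicator_of_mem (mem_Ioi.2 hx), max_eq_left hx.le, ← one_div]
    exact div_le_div_of_nonneg_right ramp_le_one (ha.trans hx.le)
  · rw [indicator_of_notMem (notMem_Ioi.2 (not_lt.1 hx)), ramp_eq_zero_of_le hac (not_lt.1 hx),
      zero_div]

theorem indicator_le_ramp_div_max (ha : 0 < a) (hac : a < c) (x : ℝ) :
    (Ioi c).indicator (·⁻¹) x ≤ ramp a c x / max x a := by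
  by_cases hx : c < x
  · rw [indicator_of_mem (mem_Ioi.2 hx), ramp_eq_one_of_le hac hx.le, max_eq_left (by linarith),
      one_div]
  · rw [indicator_of_notMem (notMem_Ioi.2 (not_lt.1 hx))]
    exact div_nonneg ramp_nonneg (ha.le.trans (le_max_right _ _))

theorem continuous_ramp_div_max (ha : 0 < a) : Continuous fun x => ramp a c x / max x a :=
  (continuous_ramp a c).div (continuous_id.max continuous_const)
    fun _ => (ha.trans_le (le_max_right _ _)).ne'

theorem abs_indicator_Ioi_inv_le (ha : 0 < a) (x : ℝ) : |(Ioi a).indicator (·⁻¹) x| ≤ a⁻¹ := by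
  by_cases hx : a < x
  · rw [indicator_of_mem (mem_Ioi.2 hx), abs_of_pos (inv_pos.2 (ha.trans hx))]
    exact inv_anti₀ ha hx.le
  · rw [indicator_of_notMem (notMem_Ioi.2 (not_lt.1 hx)), abs_zero]
    positivity

end

theorem tendsto_integral_ramp_div_max {ι : Type*} {m : Filter ι} [m.IsCountablyGenerated]
    {a c : ι → ℝ} {b : ℝ} (hb : 0 < b) (ha : Tendsto a m (𝓝 b)) (hc : Tendsto c m (𝓝 b))
    (hac : ∀ᶠ i in m, a i < c i) :
    Tendsto (fun i => ∫ x in 0..1, ramp (a i) (c i) x / max x (a i)) m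
      (𝓝 (∫ x in 0..1, (Ioi b).indicator (·⁻¹) x)) := by
  refine intervalIntegral.tendsto_integral_filter_of_dominated_convergence (fun _ => 2 / b)
    (Eventually.of_forall fun i => ((continuous_ramp _ _).measurable.div
      (measurable_id.max measurable_const)).aestronglyMeasurable) ?_ intervalIntegrable_const ?_
  · filter_upwards [ha.eventually (lt_mem_nhds (half_lt_self hb))] with i hi
    refine ae_of_all _ fun x _ => ?_
    have hmax : b / 2 ≤ max x (a i) := hi.le.trans (le_max_right _ _)
    rw [Real.norm_eq_abs, abs_of_nonneg (div_nonneg ramp_nonneg (by linarith))]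
    calc ramp (a i) (c i) x / max x (a i) ≤ 1 / (b / 2) :=
          div_le_div₀ zero_le_one ramp_le_one (by positivity) hmax
      _ = 2 / b := by ring
  · filter_upwards [(countable_singleton b).ae_notMem volume] with x hx _
    rcases lt_or_gt_of_ne hx with hxb | hxb
    · refine tendsto_const_nhds.congr' ?_
      filter_upwards [ha.eventually (lt_mem_nhds hxb), hac] with i hai haci
      rw [indicator_of_notMem (notMem_Ioi.2 hxb.le), ramp_eq_zero_of_le haci.le hai.le, zero_div]
    · refine tendsto_const_nhds.congr' ?_
      filter_upwards [hc.eventually (gt_mem_nhds hxb), hac] with i hci haci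
      rw [indicator_of_mem (mem_Ioi.2 hxb), ramp_eq_one_of_le haci hci.le,
        max_eq_left (by linarith), one_div]

theorem integral_indicator_Ioi_inv {b : ℝ} (hb : 0 < b) (hb1 : b ≤ 1) :
    ∫ x in 0..1, (Ioi b).indicator (·⁻¹) x = -log b := by
  rw [intervalIntegral.integral_of_le zero_le_one, setIntegral_indicator measurableSet_Ioi,
    Ioc_inter_Ioi, max_eq_right hb.le, ← intervalIntegral.integral_of_le hb1,
    integral_inv_of_pos hb one_pos, one_div, log_inv]

theorem tendsto_weightedAbelMean_indicator_Ioi_inv {g : ℝ → ℝ} (hg : Measurable g)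
    (hg1 : ∀ t ∈ Ioi 0, |g t| ≤ 1) (hg0 : ∀ t ∈ Ioi 0, 0 ≤ g t) {L : ℝ}
    (hA : Tendsto (weightedAbelMean g 1) (𝓝[>] 0) (𝓝 L)) {b : ℝ} (hb : 0 < b) :
    Tendsto (weightedAbelMean g ((Ioi b).indicator (·⁻¹))) (𝓝[>] 0)
      (𝓝 (L * ∫ x in 0..1, (Ioi b).indicator (·⁻¹) x)) := by
  have hjump : ∀ l ∈ Ioi (0 : ℝ), IntegrableOn (fun t =>
      exp (-l * t) * (Ioi b).indicator (·⁻¹) (exp (-l * t)) * g t) (Ioi 0) := fun l hl =>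
    integrableOn_weightedAbelMean hg hg1 hl (measurable_inv.indicator measurableSet_Ioi)
      fun x _ => abs_indicator_Ioi_inv_le hb x
  have hδ : Tendsto (fun δ : ℝ => δ) (𝓝[>] 0) (𝓝 0) := nhdsWithin_le_nhds
  refine tendsto_of_squeeze_family (m := 𝓝[>] (0 : ℝ))
    (lo := fun δ => weightedAbelMean g fun x => ramp b (b + δ) x / max x b)
    (hi := fun δ => weightedAbelMean g fun x => ramp (b - δ) b x / max x (b - δ))
    (A := fun δ => L * ∫ x in 0..1, ramp b (b + δ) x / max x b)
    (B := fun δ => L * ∫ x in 0..1, ramp (b - δ) b x / max x (b - δ)) ?_ ?_ ?_ ?_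
  · simpa using (tendsto_integral_ramp_div_max hb tendsto_const_nhds
      (by simpa using tendsto_const_nhds.add hδ) (eventually_mem_nhdsWithin.mono
        fun δ (hδ : δ ∈ Ioi 0) => lt_add_of_pos_right b hδ)).const_mul L
  · simpa using (tendsto_integral_ramp_div_max hb (by simpa using tendsto_const_nhds.sub hδ)
      tendsto_const_nhds (eventually_mem_nhdsWithin.mono
        fun δ (hδ : δ ∈ Ioi 0) => sub_lt_self b hδ)).const_mul L
  · filter_upwards [self_mem_nhdsWithin] with δ hδ
    refine ⟨tendsto_weightedAbelMean_of_continuous hg hg1 hA (continuous_ramp_div_max hb), ?_⟩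
    filter_upwards [self_mem_nhdsWithin] with l hl
    exact weightedAbelMean_mono hg0 hl
      (integrableOn_weightedAbelMean_of_continuous hg hg1 hl (continuous_ramp_div_max hb))
      (hjump l hl)
      fun x _ => ramp_div_max_le_indicator hb.le (by linarith [mem_Ioi.1 hδ]) x
  · filter_upwards [Ioo_mem_nhdsGT hb] with δ hδ
    have hbδ : 0 < b - δ := sub_pos.2 hδ.2
    refine ⟨tendsto_weightedAbelMean_of_continuous hg hg1 hA (continuous_ramp_div_max hbδ), ?_⟩
    filter_upwards [self_mem_nhdsWithin] with l hl
    exact weightedAbelMean_mono hg0 hl (hjump l hl)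
      (integrableOn_weightedAbelMean_of_continuous hg hg1 hl (continuous_ramp_div_max hbδ))
      fun x _ => indicator_le_ramp_div_max hbδ (sub_lt_self b hδ.1) x

theorem hardy_tauberian
    (g : ℝ → ℝ) (hg : Measurable g)
    (hg01 : ∀ t : ℝ, 0 ≤ t → 0 ≤ g t ∧ g t ≤ 1)
    (L : ℝ)
    (hA : Tendsto (fun l : ℝ => l * ∫ t in Set.Ioi (0:ℝ), Real.exp (-l * t) * g t)
      (nhdsWithin 0 (Set.Ioi 0)) (nhds L)) :
    Tendsto (fun T : ℝ => (1 / T) * ∫ t in (0:ℝ)..T, g t) atTop (nhds L) := by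
  have hg0 : ∀ t ∈ Ioi (0 : ℝ), 0 ≤ g t := fun t ht => (hg01 t ht.le).1
  have hg1 : ∀ t ∈ Ioi (0 : ℝ), |g t| ≤ 1 := fun t ht =>
    abs_le.2 ⟨by linarith [hg0 t ht], (hg01 t ht.le).2⟩
  have hA' : Tendsto (weightedAbelMean g 1) (𝓝[>] 0) (𝓝 L) :=
    hA.congr fun l => by simp only [weightedAbelMean, Pi.one_apply, mul_one]
  have hb : 0 < exp (-1) := exp_pos _
  have hlim := (tendsto_weightedAbelMean_indicator_Ioi_inv hg hg1 hg0 hA' hb).comp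
    tendsto_inv_atTop_nhdsGT_zero
  rw [integral_indicator_Ioi_inv hb (exp_le_one_iff.2 (by norm_num)), log_exp, neg_neg,
    mul_one] at hlim
  refine hlim.congr' ((eventually_gt_atTop 0).mono fun T hT => ?_)
  simp only [Function.comp_apply, weightedAbelMean_indicator_Ioi_inv (inv_pos.2 hT), inv_inv,
    one_div]
end
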